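/- arXiv:2008.01913 — 2 statements merged into one kernel-verified Lean document; each statement's English description precedes it below -/
import Mathlib

section
/- Let f : ℝ → ℝ be a bounded measurable function, let σ > 0, and for μ ∈ ℝ let N(μ, σ²) denote the Gaussian measure on ℝ with mean μ and variance σ². Then the map μ ↦ E_{z ~ N(μ,σ²)}[f(z)] is differentiable, and its derivative equals E_{z ~ N(μ,σ²)}[ f(z) · (z − μ)/σ² ]; that is, the gradient of the expected cost with respect to the mean parameter equals the expectation of the cost times the score function ∇_μ log of the Gaussian density. -/
/-!
Write `E_{N(m, v)}[f] = ∫ p_m f` with the Gaussian density `p_m`, and differentiate under the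
integral sign: `∂_m p_m(z) = p_m(z) (z - m) / v` is exactly the score. The interchange is justified
by dominated convergence: for `|m - μ| ≤ 1` the derivative is bounded by a multiple of
`(|z - μ| + 1) exp(-(z - μ)² / (4v))`, because `(z - μ)² ≤ 2 (z - m)² + 2 (m - μ)²`, and this
bound is integrable.
-/

open MeasureTheory ProbabilityTheory Real NNReal

namespace ProbabilityTheory

lemma hasDerivAt_gaussianPDFReal_mean (v : ℝ≥0) (z m : ℝ) :
    HasDerivAt (fun m => gaussianPDFReal m v z) (gaussianPDFReal m v z * ((z - m) / v)) m := by
  have hexponent : HasDerivAt (fun m : ℝ => -(z - m) ^ 2 / (2 * v)) ((z - m) / v) m :=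
    ((((hasDerivAt_id m).const_sub z).pow 2).neg.div_const (2 * (v : ℝ))).congr_deriv (by
      simp only [id]; ring)
  exact (hexponent.exp.const_mul (√(2 * π * v))⁻¹).congr_deriv (by rw [gaussianPDFReal]; ring)

lemma gaussianPDFReal_le (v : ℝ≥0) (m μ z : ℝ) :
    gaussianPDFReal m v z ≤
      (√(2 * π * v))⁻¹ * rexp ((m - μ) ^ 2 / (2 * v) - (z - μ) ^ 2 / (4 * v)) := by
  rw [gaussianPDFReal]
  gcongr
  have hgap : (m - μ) ^ 2 / (2 * v) - (z - μ) ^ 2 / (4 * v) - -(z - m) ^ 2 / (2 * v) =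
      (2 * (z - m) ^ 2 + 2 * (m - μ) ^ 2 - (z - μ) ^ 2) / (4 * v) := by
    ring
  have hgap_nonneg : 0 ≤ (2 * (z - m) ^ 2 + 2 * (m - μ) ^ 2 - (z - μ) ^ 2) / (4 * v) := by
    apply div_nonneg _ (by positivity)
    nlinarith [sq_nonneg (z - m - (m - μ))]
  linarith

lemma gaussianPDFReal_mul_abs_sub_le (v : ℝ≥0) {m μ : ℝ} (hm : |m - μ| ≤ 1) (z : ℝ) :
    gaussianPDFReal m v z * |z - m| ≤
      (√(2 * π * v))⁻¹ * rexp (1 / (2 * v)) *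
        ((|z - μ| + 1) * rexp (-(1 / (4 * v)) * (z - μ) ^ 2)) := by
  have hexponent : (m - μ) ^ 2 / (2 * v) - (z - μ) ^ 2 / (4 * v) ≤
      1 / (2 * v) + -(1 / (4 * v)) * (z - μ) ^ 2 := by
    have hsq : (m - μ) ^ 2 ≤ 1 := by simpa using sq_le_one_iff_abs_le_one (m - μ) |>.mpr hm
    have hsq_div : (m - μ) ^ 2 / (2 * v) ≤ 1 / (2 * v) := by gcongr
    linarith [show (z - μ) ^ 2 / (4 * v) = (1 / (4 * v)) * (z - μ) ^ 2 by ring]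
  have hdist : |z - m| ≤ |z - μ| + 1 := by
    calc |z - m| ≤ |z - μ| + |μ - m| := abs_sub_le z μ m
      _ ≤ |z - μ| + 1 := by rw [abs_sub_comm μ m]; gcongr
  calc gaussianPDFReal m v z * |z - m|
      ≤ (√(2 * π * v))⁻¹ * rexp ((m - μ) ^ 2 / (2 * v) - (z - μ) ^ 2 / (4 * v)) *
          (|z - μ| + 1) := by
        gcongr
        exact gaussianPDFReal_le v m μ z
    _ ≤ (√(2 * π * v))⁻¹ * rexp (1 / (2 * v) + -(1 / (4 * v)) * (z - μ) ^ 2) *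
          (|z - μ| + 1) := by gcongr
    _ = _ := by rw [Real.exp_add]; ring

lemma integrable_abs_add_one_mul_exp_neg_mul_sq {b : ℝ} (hb : 0 < b) :
    Integrable (fun x : ℝ => (|x| + 1) * rexp (-b * x ^ 2)) := by
  have habs : Integrable (fun x : ℝ => |x| * rexp (-b * x ^ 2)) :=
    (integrable_mul_exp_neg_mul_sq hb).abs.congr
      (ae_of_all _ fun x => by simp only [abs_mul, abs_of_pos (Real.exp_pos _)])
  exact (habs.add (integrable_exp_neg_mul_sq hb)).congr
    (ae_of_all _ fun x => by simp only [Pi.add_apply]; ring)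

variable {E : Type*} [NormedAddCommGroup E] [NormedSpace ℝ E]

theorem hasDerivAt_integral_gaussianPDFReal_smul {f : ℝ → E} (hf : AEStronglyMeasurable f)
    {M : ℝ} (hM : ∀ᵐ z, ‖f z‖ ≤ M) {v : ℝ≥0} (hv : v ≠ 0) (μ : ℝ) :
    HasDerivAt (fun m => ∫ z, gaussianPDFReal m v z • f z)
      (∫ z, (gaussianPDFReal μ v z * ((z - μ) / v)) • f z) μ := by
  have hv0 : (0 : ℝ) < v := by positivity
  set C := M / v * ((√(2 * π * v))⁻¹ * rexp (1 / (2 * v)))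
  have hdom : ∀ᵐ z, ∀ m ∈ Metric.ball μ 1,
      ‖(gaussianPDFReal m v z * ((z - m) / v)) • f z‖ ≤
        C * ((|z - μ| + 1) * rexp (-(1 / (4 * v)) * (z - μ) ^ 2)) := by
    filter_upwards [hM] with z hfz m hm_ball
    have hm : |m - μ| ≤ 1 := (mem_ball_iff_norm.mp hm_ball).le
    calc ‖(gaussianPDFReal m v z * ((z - m) / v)) • f z‖
        = gaussianPDFReal m v z * |z - m| * ‖f z‖ / v := by
          rw [norm_smul, Real.norm_eq_abs, abs_mul, abs_div, abs_of_pos hv0,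
            abs_of_nonneg (gaussianPDFReal_nonneg ..)]
          ring
      _ ≤ (√(2 * π * v))⁻¹ * rexp (1 / (2 * v)) *
            ((|z - μ| + 1) * rexp (-(1 / (4 * v)) * (z - μ) ^ 2)) * M / v := by
          gcongr ?_ * ?_ / _
          exact gaussianPDFReal_mul_abs_sub_le v hm z
      _ = C * ((|z - μ| + 1) * rexp (-(1 / (4 * v)) * (z - μ) ^ 2)) := by ring
  have hbound : Integrable (fun z => C * ((|z - μ| + 1) * rexp (-(1 / (4 * v)) * (z - μ) ^ 2))) :=
    ((integrable_abs_add_one_mul_exp_neg_mul_sq (by positivity)).comp_sub_right μ).const_mul C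
  have hF'meas : AEStronglyMeasurable (fun z => (gaussianPDFReal μ v z * ((z - μ) / v)) • f z) :=
    (((measurable_gaussianPDFReal μ v).mul (by fun_prop)).aestronglyMeasurable).smul hf
  exact (hasDerivAt_integral_of_dominated_loc_of_deriv_le (Metric.ball_mem_nhds μ one_pos)
    (.of_forall fun m => ((integrable_gaussianPDFReal m v).smul_bdd M hf hM).aestronglyMeasurable)
    ((integrable_gaussianPDFReal μ v).smul_bdd M hf hM) hF'meas hdom hbound
    (.of_forall fun z m _ => (hasDerivAt_gaussianPDFReal_mean v z m).smul_const (f z))).2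

end ProbabilityTheory

/-- Score-function (likelihood-ratio) identity for the mean of a Gaussian: for a bounded
measurable `f` and `σ > 0`, the map `μ ↦ E_{z ~ N(μ, σ²)}[f z]` is differentiable, with
derivative `E_{z ~ N(μ, σ²)}[f z · (z - μ)/σ²]`, the expectation of `f` times the score
`∇_μ log` of the Gaussian density. -/
theorem gaussian_score_gradient_mean
    (f : ℝ → ℝ) (hf : Measurable f) (hbdd : ∃ M : ℝ, ∀ z, |f z| ≤ M)
    (σ : ℝ≥0) (hσ : 0 < σ) (μ : ℝ) :
    HasDerivAt (fun m : ℝ => ∫ z, f z ∂(gaussianReal m (σ ^ 2)))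
      (∫ z, f z * ((z - μ) / (σ : ℝ) ^ 2) ∂(gaussianReal μ (σ ^ 2))) μ := by
  obtain ⟨M, hM⟩ := hbdd
  have hv : σ ^ 2 ≠ 0 := by positivity
  simp_rw [integral_gaussianReal_eq_integral_smul hv]
  refine (hasDerivAt_integral_gaussianPDFReal_smul hf.aestronglyMeasurable (.of_forall hM) hv
    μ).congr_deriv (integral_congr_ae (.of_forall fun z => ?_))
  simp only [smul_eq_mul, NNReal.coe_pow]
  ring
end

section
/- Let f : ℝ → ℝ be a bounded measurable function, let μ ∈ ℝ, and for v > 0 let N(μ, v) denote the Gaussian measure on ℝ with mean μ and variance v. Then the map v ↦ E_{z ~ N(μ,v)}[f(z)] is differentiable on (0,∞), and its derivative equals E_{z ~ N(μ,v)}[ f(z) · ( (z−μ)²/(2v²) − 1/(2v) ) ]; that is, it equals the expectation of f times the derivative of the log-density of N(μ,v) with respect to the variance parameter. -/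
/-!
For `w > 0` the Gaussian expectation is `∫ p_w(z) f(z) dz` with the explicit density `p_w`, and
`∂_w p_w = p_w · s_w` with `s_w(z) = (z - μ)²/(2w²) - 1/(2w)`. Differentiation under the integral
sign is legitimate near `v` because for `w ∈ [v/2, 2v]` the derivative `p_w |s_w| |f|` is dominated
by `C (α (z - μ)² + β) exp (-(z - μ)²/(4v))`, which is integrable.
-/

open MeasureTheory ProbabilityTheory Real NNReal Filter Set Topology

/-- `∂/∂w log (gaussianPDFReal μ w z)`. -/
noncomputable def gaussianVarianceScore (μ w z : ℝ) : ℝ := (z - μ) ^ 2 / (2 * w ^ 2) - 1 / (2 * w)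

lemma gaussianPDFReal_toNNReal (μ : ℝ) {w : ℝ} (hw : 0 ≤ w) (z : ℝ) :
    gaussianPDFReal μ w.toNNReal z = (√(2 * π * w))⁻¹ * rexp (-(z - μ) ^ 2 / (2 * w)) := by
  rw [gaussianPDFReal, Real.coe_toNNReal _ hw]

lemma integrable_quadratic_mul_exp_neg_mul_sq {b : ℝ} (hb : 0 < b) (μ α β : ℝ) :
    Integrable fun z : ℝ => (α * (z - μ) ^ 2 + β) * rexp (-b * (z - μ) ^ 2) := by
  have hsq : Integrable fun x : ℝ => x ^ (2 : ℝ) * rexp (-b * x ^ 2) :=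
    integrable_rpow_mul_exp_neg_mul_sq hb (by norm_num)
  have hquad := (hsq.const_mul α).add ((integrable_exp_neg_mul_sq hb).const_mul β)
  refine (hquad.comp_sub_right μ).congr (ae_of_all _ fun z => ?_)
  simp only [Pi.add_apply, Real.rpow_two]
  ring

lemma exists_integrable_bound_gaussianPDFReal_mul_abs_gaussianVarianceScore {a b : ℝ}
    (ha : 0 < a) (hab : a ≤ b) (μ : ℝ) :
    ∃ g : ℝ → ℝ, Integrable g ∧ ∀ w ∈ Icc a b, ∀ z,
      gaussianPDFReal μ w.toNNReal z * |gaussianVarianceScore μ w z| ≤ g z := by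
  have hb : 0 < b := ha.trans_le hab
  refine ⟨_, (integrable_quadratic_mul_exp_neg_mul_sq (b := (2 * b)⁻¹) (by positivity) μ
    (2 * a ^ 2)⁻¹ (2 * a)⁻¹).const_mul (√(2 * π * a))⁻¹, fun w ⟨haw, hwb⟩ z => ?_⟩
  have hw : 0 < w := ha.trans_le haw
  have hsqrt : (√(2 * π * w))⁻¹ ≤ (√(2 * π * a))⁻¹ := by
    gcongr
  have hexp : rexp (-(z - μ) ^ 2 / (2 * w)) ≤ rexp (-(2 * b)⁻¹ * (z - μ) ^ 2) := by
    rw [neg_div, neg_mul, Real.exp_le_exp, neg_le_neg_iff, inv_mul_eq_div]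
    gcongr
  have hscore : |gaussianVarianceScore μ w z| ≤ (2 * a ^ 2)⁻¹ * (z - μ) ^ 2 + (2 * a)⁻¹ := by
    refine (abs_sub _ _).trans ?_
    rw [abs_of_nonneg (by positivity), abs_of_nonneg (by positivity), div_eq_inv_mul, one_div]
    gcongr
  rw [gaussianPDFReal_toNNReal μ hw.le, mul_right_comm, mul_assoc]
  gcongr

lemma hasDerivAt_gaussianPDFReal_variance (μ z : ℝ) {w : ℝ} (hw : 0 < w) :
    HasDerivAt (fun w : ℝ => gaussianPDFReal μ w.toNNReal z)
      (gaussianPDFReal μ w.toNNReal z * gaussianVarianceScore μ w z) w := by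
  have hsqrt := ((hasDerivAt_id' w).const_mul (2 * π)).sqrt (by positivity)
  have hexp := ((hasDerivAt_inv hw.ne').const_mul (-(z - μ) ^ 2 / 2)).exp
  have hprod := (hsqrt.inv (by positivity)).mul hexp
  rw [gaussianPDFReal_toNNReal μ hw.le]
  refine (hprod.congr_of_eventuallyEq ?_).congr_deriv ?_
  · filter_upwards [eventually_gt_nhds hw] with u hu
    rw [gaussianPDFReal_toNNReal μ hu.le]
    simp only [Pi.mul_apply, Pi.inv_apply]
    ring_nf
  · have hs2 : √(2 * π * w) ^ 2 = 2 * π * w := Real.sq_sqrt (by positivity)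
    have harg : -(z - μ) ^ 2 / 2 * w⁻¹ = -(z - μ) ^ 2 / (2 * w) := by ring
    simp only [gaussianVarianceScore, Pi.inv_apply, harg]
    field_simp
    rw [hs2]
    ring

theorem hasDerivAt_integral_gaussianPDFReal_smul {E : Type*} [NormedAddCommGroup E]
    [NormedSpace ℝ E] {f : ℝ → E} (hf : AEStronglyMeasurable f) {M : ℝ} (hM : ∀ᵐ z, ‖f z‖ ≤ M)
    (μ : ℝ) {v : ℝ} (hv : 0 < v) :
    HasDerivAt (fun w : ℝ => ∫ z, gaussianPDFReal μ w.toNNReal z • f z)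
      (∫ z, (gaussianPDFReal μ v.toNNReal z * gaussianVarianceScore μ v z) • f z) v := by
  have hnhds : Icc (v / 2) (2 * v) ∈ 𝓝 v := Icc_mem_nhds (by linarith) (by linarith)
  obtain ⟨g, hg_int, hg⟩ :=
    exists_integrable_bound_gaussianPDFReal_mul_abs_gaussianVarianceScore (half_pos hv)
      (by linarith : v / 2 ≤ 2 * v) μ
  have hmeas (φ : ℝ → ℝ) (hφ : Measurable φ) : AEStronglyMeasurable (fun z => φ z • f z) :=
    hφ.aestronglyMeasurable.smul hf
  have hscore_meas : Measurable (gaussianVarianceScore μ v) := by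
    unfold gaussianVarianceScore
    fun_prop
  refine (hasDerivAt_integral_of_dominated_loc_of_deriv_le hnhds
    (F := fun w z => gaussianPDFReal μ w.toNNReal z • f z)
    (F' := fun w z => (gaussianPDFReal μ w.toNNReal z * gaussianVarianceScore μ w z) • f z)
    (bound := fun z => M * g z)
    (Eventually.of_forall fun w => hmeas _ (measurable_gaussianPDFReal μ _))
    ((integrable_gaussianPDFReal μ _).smul_bdd M hf hM)
    (hmeas _ ((measurable_gaussianPDFReal μ _).mul hscore_meas)) ?_ (hg_int.const_mul M) ?_).2
  · filter_upwards [hM] with z hz w hw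
    rw [norm_smul, Real.norm_eq_abs, abs_mul, abs_of_nonneg (gaussianPDFReal_nonneg _ _ _),
      mul_comm]
    exact mul_le_mul hz (hg w hw z)
      (mul_nonneg (gaussianPDFReal_nonneg _ _ _) (abs_nonneg _)) ((norm_nonneg _).trans hz)
  · refine ae_of_all _ fun z w hw => ?_
    exact (hasDerivAt_gaussianPDFReal_variance μ z ((half_pos hv).trans_le hw.1)).smul_const (f z)

/-- Score-function (likelihood-ratio) identity for the variance of a Gaussian: for a bounded
measurable `f`, `μ ∈ ℝ`, and `v > 0`, the map `v ↦ E_{z ~ N(μ, v)}[f z]` is differentiable at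
every `v > 0`, with derivative `E_{z ~ N(μ, v)}[f z · ((z - μ)²/(2v²) - 1/(2v))]`, the
expectation of `f` times the derivative in `v` of the log-density of `N(μ, v)`. -/
theorem gaussian_score_gradient_variance
    (f : ℝ → ℝ) (hf : Measurable f) (hbdd : ∃ M : ℝ, ∀ z, |f z| ≤ M)
    (μ : ℝ) (v : ℝ) (hv : 0 < v) :
    HasDerivAt (fun w : ℝ => ∫ z, f z ∂(gaussianReal μ w.toNNReal))
      (∫ z, f z * ((z - μ) ^ 2 / (2 * v ^ 2) - 1 / (2 * v)) ∂(gaussianReal μ v.toNNReal))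
      v := by
  obtain ⟨M, hM⟩ := hbdd
  have hderiv := hasDerivAt_integral_gaussianPDFReal_smul hf.aestronglyMeasurable
    (ae_of_all _ hM) μ hv
  rw [integral_gaussianReal_eq_integral_smul (Real.toNNReal_pos.mpr hv).ne']
  refine (hderiv.congr_of_eventuallyEq ?_).congr_deriv ?_
  · filter_upwards [eventually_gt_nhds hv] with w hw
    exact integral_gaussianReal_eq_integral_smul (Real.toNNReal_pos.mpr hw).ne'
  · congr 1 with z
    simp only [smul_eq_mul, gaussianVarianceScore]
    ring
end
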